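/- Let f : ℝ → ℝ be defined by f(φ) := #{ t ∈ {0, 2π/3, 4π/3} : cos(φ − t) > 0 } (so f takes only the values 1 and 2). Then for every integer k: ∫_{−π}^{π} f(φ) e^{ikφ} dφ equals 3π if k = 0; equals 6/k if (k + 3)/12 is an integer; equals −6/k if (k − 3)/12 is an integer; and equals 0 otherwise. -/

import Mathlib

open MeasureTheory Real

noncomputable section

/-- `f(φ)` counts how many of the three instants `t ∈ {0, 2π/3, 4π/3}` satisfy
`cos(φ − t) > 0`; it takes only the values 1 and 2. -/
def stepf (φ : ℝ) : ℕ :=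
  Set.ncard {t ∈ ({0, 2 * π / 3, 4 * π / 3} : Set ℝ) | 0 < Real.cos (φ - t)}

def Ek (k : ℤ) (φ : ℝ) : ℂ := Complex.exp (Complex.I * k * φ)
def hstep (k : ℤ) (t φ : ℝ) : ℂ := if 0 < Real.cos (φ - t) then Ek k φ else 0

lemma hstep_intInt (k : ℤ) (t a b : ℝ) : IntervalIntegrable (hstep k t) volume a b := by
  have hE : Continuous (Ek k) :=
    Complex.continuous_exp.comp (continuous_const.mul Complex.continuous_ofReal)
  have hS : MeasurableSet {φ : ℝ | 0 < Real.cos (φ - t)} :=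
    (isOpen_lt continuous_const (Real.continuous_cos.comp (continuous_sub_right t))).measurableSet
  have heq : hstep k t = Set.indicator {φ | 0 < Real.cos (φ - t)} (Ek k) := by
    ext φ; simp [hstep, Set.indicator_apply, Set.mem_setOf_eq]
  rw [heq]
  exact ⟨((hE.intervalIntegrable a b).1).indicator hS, ((hE.intervalIntegrable a b).2).indicator hS⟩

lemma piece_pos (k : ℤ) (t a b : ℝ) (hab : a ≤ b)
    (h : ∀ x ∈ Set.Ioo a b, 0 < Real.cos (x - t)) :
    ∫ φ in a..b, hstep k t φ = ∫ φ in a..b, Ek k φ := by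
  rw [intervalIntegral.integral_of_le hab, intervalIntegral.integral_of_le hab,
    integral_Ioc_eq_integral_Ioo, integral_Ioc_eq_integral_Ioo]
  exact setIntegral_congr_fun measurableSet_Ioo (fun x hx => if_pos (h x hx))

lemma piece_neg (k : ℤ) (t a b : ℝ) (hab : a ≤ b)
    (h : ∀ x ∈ Set.Ioo a b, Real.cos (x - t) < 0) :
    ∫ φ in a..b, hstep k t φ = 0 := by
  rw [intervalIntegral.integral_of_le hab, integral_Ioc_eq_integral_Ioo]
  have he : Set.EqOn (hstep k t) (fun _ => (0:ℂ)) (Set.Ioo a b) :=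
    fun x hx => if_neg (h x hx).not_gt
  rw [setIntegral_congr_fun measurableSet_Ioo he]
  simp

lemma stepf_mul_eq (k : ℤ) (φ : ℝ) :
    (stepf φ : ℂ) * Complex.exp (Complex.I * (k : ℂ) * (φ : ℂ)) =
      hstep k 0 φ + hstep k (2 * π / 3) φ + hstep k (4 * π / 3) φ := by
  classical
  have h01 : (0:ℝ) ≠ 2 * π / 3 := by have := Real.pi_pos; intro h; linarith [h]
  have h02 : (0:ℝ) ≠ 4 * π / 3 := by have := Real.pi_pos; intro h; linarith [h]
  have h12 : (2 * π / 3 : ℝ) ≠ 4 * π / 3 := by have := Real.pi_pos; intro h; linarith [h]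
  have hset : {t ∈ ({0, 2 * π / 3, 4 * π / 3} : Set ℝ) | 0 < Real.cos (φ - t)} =
      ↑(({0, 2 * π / 3, 4 * π / 3} : Finset ℝ).filter (fun t => 0 < Real.cos (φ - t))) := by
    ext t; simp
  have hcard : stepf φ = (if 0 < Real.cos (φ - 0) then 1 else 0)
      + (if 0 < Real.cos (φ - 2 * π / 3) then 1 else 0)
      + (if 0 < Real.cos (φ - 4 * π / 3) then 1 else 0) := by
    rw [stepf, hset, Set.ncard_coe_finset, Finset.card_filter]
    rw [Finset.sum_insert (by simp [h01, h02]), Finset.sum_insert (by simp [h12]),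
      Finset.sum_singleton, add_assoc]
  rw [hcard]
  unfold hstep Ek
  split_ifs <;> push_cast <;> ring

/-- For every integer `k`, `∫_{−π}^{π} f(φ) e^{ikφ} dφ` equals `3π` if
`k = 0`; equals `6/k` if `(k + 3)/12` is an integer; equals `−6/k` if `(k − 3)/12` is an
integer; and equals `0` otherwise. -/
theorem integral_stepf_exp (k : ℤ) :
    ∫ φ in (-π)..π, (stepf φ : ℂ) * Complex.exp (Complex.I * (k : ℂ) * (φ : ℂ)) =
      if k = 0 then 3 * (π : ℂ)
      else if (12 : ℤ) ∣ (k + 3) then 6 / (k : ℂ)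
      else if (12 : ℤ) ∣ (k - 3) then -(6 / (k : ℂ))
      else 0 := by
  have hpi := Real.pi_pos
  simp only [stepf_mul_eq k]
  rw [intervalIntegral.integral_add
      ((hstep_intInt k 0 (-π) π).add (hstep_intInt k (2*π/3) (-π) π))
      (hstep_intInt k (4*π/3) (-π) π),
    intervalIntegral.integral_add (hstep_intInt k 0 (-π) π) (hstep_intInt k (2*π/3) (-π) π)]
  have H0 : ∫ φ in (-π)..π, hstep k 0 φ = ∫ φ in (-(π/2))..(π/2), Ek k φ := by
    rw [← intervalIntegral.integral_add_adjacent_intervals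
        (hstep_intInt k 0 (-π) (-(π/2))) (hstep_intInt k 0 (-(π/2)) π),
      ← intervalIntegral.integral_add_adjacent_intervals
        (hstep_intInt k 0 (-(π/2)) (π/2)) (hstep_intInt k 0 (π/2) π)]
    rw [piece_neg k 0 (-π) (-(π/2)) (by linarith) (fun x hx => by
      obtain ⟨h1, h2⟩ := hx
      rw [sub_zero, ← Real.cos_neg]
      exact Real.cos_neg_of_pi_div_two_lt_of_lt (by linarith) (by linarith))]
    rw [piece_pos k 0 (-(π/2)) (π/2) (by linarith) (fun x hx => by
      obtain ⟨h1, h2⟩ := hx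
      rw [sub_zero]
      exact Real.cos_pos_of_mem_Ioo ⟨by linarith, by linarith⟩)]
    rw [piece_neg k 0 (π/2) π (by linarith) (fun x hx => by
      obtain ⟨h1, h2⟩ := hx
      rw [sub_zero]
      exact Real.cos_neg_of_pi_div_two_lt_of_lt (by linarith) (by linarith))]
    ring
  have H1 : ∫ φ in (-π)..π, hstep k (2*π/3) φ =
      (∫ φ in (-π)..(-(5*π/6)), Ek k φ) + ∫ φ in (π/6)..π, Ek k φ := by
    rw [← intervalIntegral.integral_add_adjacent_intervals
        (hstep_intInt k (2*π/3) (-π) (-(5*π/6))) (hstep_intInt k (2*π/3) (-(5*π/6)) π),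
      ← intervalIntegral.integral_add_adjacent_intervals
        (hstep_intInt k (2*π/3) (-(5*π/6)) (π/6)) (hstep_intInt k (2*π/3) (π/6) π)]
    rw [piece_pos k (2*π/3) (-π) (-(5*π/6)) (by linarith) (fun x hx => by
      obtain ⟨h1, h2⟩ := hx
      rw [← Real.cos_add_two_pi]
      exact Real.cos_pos_of_mem_Ioo ⟨by linarith, by linarith⟩)]
    rw [piece_neg k (2*π/3) (-(5*π/6)) (π/6) (by linarith) (fun x hx => by
      obtain ⟨h1, h2⟩ := hx
      rw [← Real.cos_neg]
      exact Real.cos_neg_of_pi_div_two_lt_of_lt (by linarith) (by linarith))]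
    rw [piece_pos k (2*π/3) (π/6) π (by linarith) (fun x hx => by
      obtain ⟨h1, h2⟩ := hx
      exact Real.cos_pos_of_mem_Ioo ⟨by linarith, by linarith⟩)]
    ring
  have H2 : ∫ φ in (-π)..π, hstep k (4*π/3) φ =
      (∫ φ in (-π)..(-(π/6)), Ek k φ) + ∫ φ in (5*π/6)..π, Ek k φ := by
    rw [← intervalIntegral.integral_add_adjacent_intervals
        (hstep_intInt k (4*π/3) (-π) (-(π/6))) (hstep_intInt k (4*π/3) (-(π/6)) π),
      ← intervalIntegral.integral_add_adjacent_intervals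
        (hstep_intInt k (4*π/3) (-(π/6)) (5*π/6)) (hstep_intInt k (4*π/3) (5*π/6) π)]
    rw [piece_pos k (4*π/3) (-π) (-(π/6)) (by linarith) (fun x hx => by
      obtain ⟨h1, h2⟩ := hx
      rw [← Real.cos_add_two_pi]
      exact Real.cos_pos_of_mem_Ioo ⟨by linarith, by linarith⟩)]
    rw [piece_neg k (4*π/3) (-(π/6)) (5*π/6) (by linarith) (fun x hx => by
      obtain ⟨h1, h2⟩ := hx
      rw [← Real.cos_neg]
      exact Real.cos_neg_of_pi_div_two_lt_of_lt (by linarith) (by linarith))]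
    rw [piece_pos k (4*π/3) (5*π/6) π (by linarith) (fun x hx => by
      obtain ⟨h1, h2⟩ := hx
      exact Real.cos_pos_of_mem_Ioo ⟨by linarith, by linarith⟩)]
    ring
  rw [H0, H1, H2]
  by_cases hk0 : k = 0
  · subst hk0
    rw [if_pos rfl]
    have hE1 : Ek 0 = fun _ => (1:ℂ) := by funext φ; simp [Ek]
    rw [hE1]
    simp only [intervalIntegral.integral_const, Complex.real_smul, mul_one]
    push_cast
    ring
  · rw [if_neg hk0]
    have hkC : (k:ℂ) ≠ 0 := Int.cast_ne_zero.mpr hk0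
    have hc : Complex.I * (k:ℂ) ≠ 0 := mul_ne_zero Complex.I_ne_zero hkC
    simp only [Ek]
    rw [integral_exp_mul_complex hc, integral_exp_mul_complex hc, integral_exp_mul_complex hc,
      integral_exp_mul_complex hc, integral_exp_mul_complex hc]
    set z : ℂ := Complex.exp (Complex.I * (k:ℂ) * ((π/6 : ℝ) : ℂ)) with hz
    have hpow : ∀ n : ℕ, Complex.exp (Complex.I * (k:ℂ) * (((n : ℝ) * (π/6) : ℝ) : ℂ)) = z ^ n := by
      intro n
      rw [hz, ← Complex.exp_nat_mul]
      congr 1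
      push_cast
      ring
    have h2pi : Complex.exp (Complex.I * (k:ℂ) * ((2*π : ℝ) : ℂ)) = 1 := by
      rw [← Complex.exp_int_mul_two_pi_mul_I k]
      congr 1
      push_cast
      ring
    have hval : ∀ (x : ℝ) (n : ℕ), x = (n : ℝ) * (π/6) →
        Complex.exp (Complex.I * (k:ℂ) * (x : ℂ)) = z ^ n := by
      intro x n hxn; rw [hxn]; exact hpow n
    have hvalneg : ∀ (x : ℝ) (n : ℕ), x + 2*π = (n : ℝ) * (π/6) →
        Complex.exp (Complex.I * (k:ℂ) * (x : ℂ)) = z ^ n := by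
      intro x n hxn
      have : Complex.exp (Complex.I * (k:ℂ) * (x : ℂ))
          = Complex.exp (Complex.I * (k:ℂ) * ((x + 2*π : ℝ) : ℂ)) := by
        rw [show ((x + 2*π : ℝ):ℂ) = (x:ℂ) + ((2*π : ℝ):ℂ) by push_cast; ring,
          mul_add, Complex.exp_add, h2pi, mul_one]
      rw [this, hxn]; exact hpow n
    have hz12 : z ^ 12 = 1 := by
      rw [← hval (2*π) 12 (by push_cast; ring)]
      exact h2pi
    rw [hval (π/2) 3 (by push_cast; ring), hvalneg (-(π/2)) 9 (by push_cast; ring),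
      hvalneg (-(5*π/6)) 7 (by push_cast; ring), hvalneg (-π) 6 (by push_cast; ring),
      hval π 6 (by push_cast; ring),
      hvalneg (-(π/6)) 11 (by push_cast; ring), hval (5*π/6) 5 (by push_cast; ring)]
    have flat : ∀ A B C D E c : ℂ, A/c + (B/c + C/c) + (D/c + E/c) = (A + B + C + D + E)/c := by
      intros; ring
    rw [flat]
    by_cases h3 : (12:ℤ) ∣ (k + 3)
    · rw [if_pos h3]
      obtain ⟨n, hn⟩ := h3
      have hkc : (k:ℂ) = 12*(n:ℂ) - 3 := by
        have : k = 12*n - 3 := by omega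
        rw [this]; push_cast; ring
      have hzI : z = -Complex.I := by
        rw [hz, show Complex.I * (k:ℂ) * ((π/6 : ℝ):ℂ)
            = (n:ℂ) * (2*(π:ℂ)*Complex.I) + (-((π:ℂ)/2)) * Complex.I by
          rw [hkc]; push_cast; ring]
        rw [Complex.exp_add, Complex.exp_int_mul_two_pi_mul_I, one_mul, Complex.exp_mul_I]
        simp [Complex.cos_pi_div_two, Complex.sin_pi_div_two]
      have hz2 : z^2 = -1 := by rw [hzI, neg_sq, Complex.I_sq]
      have hS : (z^3 - z^9) + (z^7 - z^6) + (z^6 - z) + (z^11 - z^6) + (z^6 - z^5)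
          = 6 * Complex.I := by
        linear_combination (z*(z^8 - 2*z^6 + 3*z^4 - 4*z^2 + 5)) * hz2 - 6 * hzI
      rw [hS]
      field_simp
    · rw [if_neg h3]
      by_cases h3' : (12:ℤ) ∣ (k - 3)
      · rw [if_pos h3']
        obtain ⟨n, hn⟩ := h3'
        have hkc : (k:ℂ) = 12*(n:ℂ) + 3 := by
          have : k = 12*n + 3 := by omega
          rw [this]; push_cast; ring
        have hzI : z = Complex.I := by
          rw [hz, show Complex.I * (k:ℂ) * ((π/6 : ℝ):ℂ)
              = (n:ℂ) * (2*(π:ℂ)*Complex.I) + ((π:ℂ)/2) * Complex.I by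
            rw [hkc]; push_cast; ring]
          rw [Complex.exp_add, Complex.exp_int_mul_two_pi_mul_I, one_mul, Complex.exp_mul_I]
          simp [Complex.cos_pi_div_two, Complex.sin_pi_div_two]
        have hz2 : z^2 = -1 := by rw [hzI, Complex.I_sq]
        have hS : (z^3 - z^9) + (z^7 - z^6) + (z^6 - z) + (z^11 - z^6) + (z^6 - z^5)
            = -(6 * Complex.I) := by
          linear_combination (z*(z^8 - 2*z^6 + 3*z^4 - 4*z^2 + 5)) * hz2 - 6 * hzI
        rw [hS]
        field_simp
      · rw [if_neg h3']
        have hS : (z^3 - z^9) + (z^7 - z^6) + (z^6 - z) + (z^11 - z^6) + (z^6 - z^5) = 0 := by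
          by_cases hd3 : (3:ℤ) ∣ k
          · have h6 : (6:ℤ) ∣ k := by omega
            obtain ⟨j, hj⟩ := h6
            have hkc : (k:ℂ) = 6*(j:ℂ) := by rw [hj]; push_cast; ring
            have hz2 : z^2 = 1 := by
              rw [hz, ← Complex.exp_nat_mul,
                show ((2:ℕ):ℂ) * (Complex.I * (k:ℂ) * ((π/6 : ℝ):ℂ))
                  = (j:ℂ) * (2*(π:ℂ)*Complex.I) by rw [hkc]; push_cast; ring]
              exact Complex.exp_int_mul_two_pi_mul_I j
            linear_combination (z*(z^8 + z^4 + 1)) * hz2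
          · have h4 : z^4 ≠ 1 := by
              intro h1
              have he4 : Complex.exp (((4:ℕ):ℂ) * (Complex.I * (k:ℂ) * ((π/6 : ℝ):ℂ))) = 1 := by
                rw [Complex.exp_nat_mul, ← hz, h1]
              obtain ⟨n, hn⟩ := Complex.exp_eq_one_iff.mp he4
              have h2' : ((4*(π/6)*(k:ℝ) : ℝ) : ℂ) * Complex.I
                  = ((2*π*(n:ℝ) : ℝ) : ℂ) * Complex.I := by
                push_cast at hn ⊢
                linear_combination hn
              have h3r : (4*(π/6)*(k:ℝ) : ℝ) = 2*π*(n:ℝ) :=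
                Complex.ofReal_inj.mp (mul_right_cancel₀ Complex.I_ne_zero h2')
              have hk3 : (k:ℝ) = 3*(n:ℝ) := by
                have := mul_right_cancel₀ Real.pi_ne_zero
                  (show (k:ℝ)*(2/3)*π = (n:ℝ)*2*π by linarith)
                linarith
              exact hd3 ⟨n, by exact_mod_cast hk3⟩
            have h841 : z^8 + z^4 + 1 = 0 := by
              have hfac : (z^4 - 1) * (z^8 + z^4 + 1) = 0 := by linear_combination hz12
              rcases mul_eq_zero.mp hfac with h | h
              · exact absurd (by linear_combination h) h4
              · exact h
            linear_combination (z*(z^2 - 1)) * h841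
        rw [hS]
        simp
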